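/- arXiv:0907.2861 — 5 statements merged into one kernel-verified Lean document; each statement's English description precedes it below -/
import Mathlib

section
/- Let u_i = (cos θ_i, sin θ_i) for i = 1, 2, 3 be unit vectors in R^2 with the angles satisfying θ_i - θ_j ≢ 0 (mod π) for i ≠ j (i.e. the three directions are distinct). Define c_1 = cos(θ_2 - θ_3)/(sin(θ_2 - θ_1) sin(θ_3 - θ_1)), c_2 = cos(θ_3 - θ_1)/(sin(θ_3 - θ_2) sin(θ_1 - θ_2)), c_3 = cos(θ_1 - θ_2)/(sin(θ_1 - θ_3) sin(θ_2 - θ_3)). Then c_1 (u_1 ⊗ u_1) + c_2 (u_2 ⊗ u_2) + c_3 (u_3 ⊗ u_3) = Id on R^2, where u ⊗ u denotes the rank-one operator v ↦ (v·u) u. -/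
open Real

/-- A rank-one operator `u ⊗ u` on `ℝ²` applied to `v`: `(v·u) • u`. -/
noncomputable def tensorSq (u v : ℝ × ℝ) : ℝ × ℝ := (v.1 * u.1 + v.2 * u.2) • u

/-!
Rewriting `sin (θⱼ - θᵢ)` and `cos (θⱼ - θₖ)` as cross and dot products of the `uᵢ`, the
coefficient `cᵢ` becomes homogeneous of degree `-2` in `uᵢ` and of degree `0` in the other two
vectors. The identity therefore holds for any three pairwise independent vectors of `ℝ²`, where,
after clearing denominators, it is a polynomial identity.
-/

namespace Prod

def dot (u w : ℝ × ℝ) : ℝ := u.1 * w.1 + u.2 * w.2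

def cross (u w : ℝ × ℝ) : ℝ := u.1 * w.2 - u.2 * w.1

theorem dot_cos_sin (α β : ℝ) : dot (cos α, sin α) (cos β, sin β) = cos (α - β) := by
  rw [dot, cos_sub]

theorem cross_cos_sin (α β : ℝ) : cross (cos α, sin α) (cos β, sin β) = sin (β - α) := by
  rw [cross, sin_sub]
  ring

theorem cross_anticomm (u w : ℝ × ℝ) : cross w u = -cross u w := by
  rw [cross, cross]
  ring

theorem sum_smul_tensorSq_eq_self (u₁ u₂ u₃ v : ℝ × ℝ)
    (h12 : cross u₁ u₂ ≠ 0) (h13 : cross u₁ u₃ ≠ 0) (h23 : cross u₂ u₃ ≠ 0) :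
    (dot u₂ u₃ / (cross u₁ u₂ * cross u₁ u₃)) • tensorSq u₁ v +
      (dot u₃ u₁ / (cross u₂ u₃ * cross u₂ u₁)) • tensorSq u₂ v +
      (dot u₁ u₂ / (cross u₃ u₁ * cross u₃ u₂)) • tensorSq u₃ v = v := by
  rw [cross_anticomm u₁ u₂, cross_anticomm u₁ u₃, cross_anticomm u₂ u₃]
  ext <;> simp only [tensorSq, fst_add, snd_add, smul_fst, smul_snd, smul_eq_mul] <;>
    field_simp <;> simp only [dot, cross] <;> ring

end Prod

open Prod in
theorem stmt0 (θ₁ θ₂ θ₃ : ℝ)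
    (h12 : Real.sin (θ₁ - θ₂) ≠ 0) (h13 : Real.sin (θ₁ - θ₃) ≠ 0)
    (h23 : Real.sin (θ₂ - θ₃) ≠ 0)
    (u : Fin 3 → ℝ × ℝ)
    (hu1 : u 0 = (Real.cos θ₁, Real.sin θ₁))
    (hu2 : u 1 = (Real.cos θ₂, Real.sin θ₂))
    (hu3 : u 2 = (Real.cos θ₃, Real.sin θ₃))
    (c₁ c₂ c₃ : ℝ)
    (hc1 : c₁ = Real.cos (θ₂ - θ₃) / (Real.sin (θ₂ - θ₁) * Real.sin (θ₃ - θ₁)))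
    (hc2 : c₂ = Real.cos (θ₃ - θ₁) / (Real.sin (θ₃ - θ₂) * Real.sin (θ₁ - θ₂)))
    (hc3 : c₃ = Real.cos (θ₁ - θ₂) / (Real.sin (θ₁ - θ₃) * Real.sin (θ₂ - θ₃))) :
    ∀ v : ℝ × ℝ,
      c₁ • tensorSq (u 0) v + c₂ • tensorSq (u 1) v + c₃ • tensorSq (u 2) v = v := by
  intro v
  simp only [← cross_cos_sin, ← dot_cos_sin] at h12 h13 h23 hc1 hc2 hc3
  rw [cross_anticomm, neg_ne_zero] at h12 h13 h23
  rw [hu1, hu2, hu3, hc1, hc2, hc3]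
  exact sum_smul_tensorSq_eq_self _ _ _ v h12 h13 h23
end

section
/- Let c_1, c_2, c_3 ∈ (0,1) satisfy c_1 + c_2 + c_3 = 2. Define vectors u_1 = (1, 0), u_2 = (√((1-c_1)(1-c_2)/(c_1 c_2)), √((1-c_3)/(c_1 c_2))), u_3 = (−√((1-c_1)(1-c_3)/(c_1 c_3)), √((1-c_2)/(c_1 c_3))). Then u_1, u_2, u_3 are unit vectors and c_1 (u_1 ⊗ u_1) + c_2 (u_2 ⊗ u_2) + c_3 (u_3 ⊗ u_3) = Id_{R^2}. -/
open Real

theorem stmt6 (c₁ c₂ c₃ : ℝ)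
    (h1 : c₁ ∈ Set.Ioo (0:ℝ) 1) (h2 : c₂ ∈ Set.Ioo (0:ℝ) 1) (h3 : c₃ ∈ Set.Ioo (0:ℝ) 1)
    (hsum : c₁ + c₂ + c₃ = 2)
    (u₁ u₂ u₃ : ℝ × ℝ)
    (hu1 : u₁ = (1, 0))
    (hu2 : u₂ = (Real.sqrt ((1 - c₁) * (1 - c₂) / (c₁ * c₂)),
                 Real.sqrt ((1 - c₃) / (c₁ * c₂))))
    (hu3 : u₃ = (-Real.sqrt ((1 - c₁) * (1 - c₃) / (c₁ * c₃)),
                 Real.sqrt ((1 - c₂) / (c₁ * c₃)))) :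
    (u₁.1 ^ 2 + u₁.2 ^ 2 = 1 ∧ u₂.1 ^ 2 + u₂.2 ^ 2 = 1 ∧ u₃.1 ^ 2 + u₃.2 ^ 2 = 1) ∧
    ∀ v : ℝ × ℝ,
      c₁ • tensorSq u₁ v + c₂ • tensorSq u₂ v + c₃ • tensorSq u₃ v = v := by
  obtain ⟨hc1, hc1'⟩ := h1
  obtain ⟨hc2, hc2'⟩ := h2
  obtain ⟨hc3, hc3'⟩ := h3
  have hc1n : c₁ ≠ 0 := ne_of_gt hc1
  have hc2n : c₂ ≠ 0 := ne_of_gt hc2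
  have hc3n : c₃ ≠ 0 := ne_of_gt hc3
  have h1c1 : (0:ℝ) < 1 - c₁ := by linarith
  have h1c2 : (0:ℝ) < 1 - c₂ := by linarith
  have h1c3 : (0:ℝ) < 1 - c₃ := by linarith
  set A := Real.sqrt ((1 - c₁) * (1 - c₂) / (c₁ * c₂)) with hA
  set B := Real.sqrt ((1 - c₃) / (c₁ * c₂)) with hB
  set C := Real.sqrt ((1 - c₁) * (1 - c₃) / (c₁ * c₃)) with hC
  set D := Real.sqrt ((1 - c₂) / (c₁ * c₃)) with hD
  have hA2 : c₁ * c₂ * A ^ 2 = (1 - c₁) * (1 - c₂) := by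
    rw [hA, Real.sq_sqrt (by positivity)]; field_simp
  have hB2 : c₁ * c₂ * B ^ 2 = 1 - c₃ := by
    rw [hB, Real.sq_sqrt (by positivity)]; field_simp
  have hC2 : c₁ * c₃ * C ^ 2 = (1 - c₁) * (1 - c₃) := by
    rw [hC, Real.sq_sqrt (by positivity)]; field_simp
  have hD2 : c₁ * c₃ * D ^ 2 = 1 - c₂ := by
    rw [hD, Real.sq_sqrt (by positivity)]; field_simp
  have hAB : c₁ * c₂ * (A * B) = Real.sqrt ((1 - c₁) * (1 - c₂) * (1 - c₃)) := by
    rw [hA, hB, ← Real.sqrt_mul (by positivity)]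
    rw [show (1 - c₁) * (1 - c₂) / (c₁ * c₂) * ((1 - c₃) / (c₁ * c₂))
        = (1 - c₁) * (1 - c₂) * (1 - c₃) / (c₁ * c₂) ^ 2 by ring]
    rw [Real.sqrt_div (by positivity), Real.sqrt_sq (by positivity)]
    field_simp
  have hCD : c₁ * c₃ * (C * D) = Real.sqrt ((1 - c₁) * (1 - c₂) * (1 - c₃)) := by
    rw [hC, hD, ← Real.sqrt_mul (by positivity)]
    rw [show (1 - c₁) * (1 - c₃) / (c₁ * c₃) * ((1 - c₂) / (c₁ * c₃))
        = (1 - c₁) * (1 - c₂) * (1 - c₃) / (c₁ * c₃) ^ 2 by ring]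
    rw [Real.sqrt_div (by positivity), Real.sqrt_sq (by positivity)]
    field_simp
  subst hu1 hu2 hu3
  refine ⟨⟨by norm_num, ?_, ?_⟩, ?_⟩
  · show A ^ 2 + B ^ 2 = 1
    apply mul_left_cancel₀ (show c₁ * c₂ ≠ 0 by positivity)
    linear_combination hA2 + hB2 - hsum
  · show (-C) ^ 2 + D ^ 2 = 1
    apply mul_left_cancel₀ (show c₁ * c₃ ≠ 0 by positivity)
    linear_combination hC2 + hD2 - hsum
  · intro v
    simp only [tensorSq, Prod.smul_mk, Prod.mk_add_mk, smul_eq_mul, Prod.ext_iff,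
      Prod.fst_add, Prod.snd_add, Prod.smul_fst, Prod.smul_snd]
    constructor
    · apply mul_left_cancel₀ hc1n
      linear_combination v.1 * hA2 + v.1 * hC2 + v.2 * hAB - v.2 * hCD
        + (v.1 * (c₁ - 1)) * hsum
    · apply mul_left_cancel₀ hc1n
      linear_combination v.2 * hB2 + v.2 * hD2 + v.1 * hAB - v.1 * hCD
        - v.2 * hsum
end

section
/- Let p_1, p_2, p_3 > 1 with 1/p_1 + 1/p_2 + 1/p_3 = 2, and set u_1 = (1,0), u_2 = (√((p_1−1)(p_2−1)), √(p_1 p_2 (p_3−1)/p_3)), u_3 = (−√((p_1−1)(p_3−1)), √(p_1 p_3 (p_2−1)/p_2)). Then (1/p_1)(u_1 ⊗ u_1) + (1/p_2)(u_2 ⊗ u_2) + (1/p_3)(u_3 ⊗ u_3) = Id_{R^2}. -/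
/-!
Comparing coordinates, `∑ cᵢ uᵢ ⊗ uᵢ = Id` on `ℝ²` amounts to three scalar equations in the entries
of the `uᵢ`. With `cᵢ = 1 / pᵢ` we have `cᵢ (pᵢ - 1) = 1 - cᵢ`, so both diagonal equations reduce
to `c₁ + c₂ + c₃ = 2`; in the off-diagonal one the two cross terms cancel, as each equals
`√(p₁ (p₁ - 1) (p₂ - 1) (p₃ - 1) / (p₂ p₃))`.
-/

open Real

open Finset

theorem sum_smul_tensorSq_eq_self {ι : Type*} (s : Finset ι) (c : ι → ℝ) (u : ι → ℝ × ℝ)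
    (h₁₁ : ∑ i ∈ s, c i * (u i).1 ^ 2 = 1) (h₁₂ : ∑ i ∈ s, c i * ((u i).1 * (u i).2) = 0)
    (h₂₂ : ∑ i ∈ s, c i * (u i).2 ^ 2 = 1) (v : ℝ × ℝ) :
    ∑ i ∈ s, c i • tensorSq (u i) v = v := by
  ext
  · calc (∑ i ∈ s, c i • tensorSq (u i) v).1
        = ∑ i ∈ s, (v.1 * (c i * (u i).1 ^ 2) + v.2 * (c i * ((u i).1 * (u i).2))) := by
          rw [Prod.fst_sum]
          exact sum_congr rfl fun i _ => by simp only [tensorSq, Prod.smul_fst, smul_eq_mul]; ring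
      _ = v.1 := by rw [sum_add_distrib, ← mul_sum, ← mul_sum, h₁₁, h₁₂]; ring
  · calc (∑ i ∈ s, c i • tensorSq (u i) v).2
        = ∑ i ∈ s, (v.1 * (c i * ((u i).1 * (u i).2)) + v.2 * (c i * (u i).2 ^ 2)) := by
          rw [Prod.snd_sum]
          exact sum_congr rfl fun i _ => by simp only [tensorSq, Prod.smul_snd, smul_eq_mul]; ring
      _ = v.2 := by rw [sum_add_distrib, ← mul_sum, ← mul_sum, h₂₂, h₁₂]; ring

theorem one_div_mul_sqrt_mul_sqrt {a b c : ℝ} (ha : 1 ≤ a) (hb : 1 ≤ b) (hc : 1 ≤ c) :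
    1 / b * (√((a - 1) * (b - 1)) * √(a * b * (c - 1) / c)) =
      √(a * (a - 1) * (b - 1) * (c - 1) / (b * c)) := by
  have hb0 : 0 < b := by linarith
  rw [← sqrt_mul (by nlinarith), show 1 / b = √((1 / b) ^ 2) from (sqrt_sq (by positivity)).symm,
    ← sqrt_mul (by positivity)]
  congr 1
  field_simp

theorem stmt9 (p₁ p₂ p₃ : ℝ) (hp1 : 1 < p₁) (hp2 : 1 < p₂) (hp3 : 1 < p₃)
    (hsum : 1 / p₁ + 1 / p₂ + 1 / p₃ = 2)
    (u₁ u₂ u₃ : ℝ × ℝ)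
    (hu1 : u₁ = (1, 0))
    (hu2 : u₂ = (Real.sqrt ((p₁ - 1) * (p₂ - 1)), Real.sqrt (p₁ * p₂ * (p₃ - 1) / p₃)))
    (hu3 : u₃ = (-Real.sqrt ((p₁ - 1) * (p₃ - 1)), Real.sqrt (p₁ * p₃ * (p₂ - 1) / p₂))) :
    ∀ v : ℝ × ℝ,
      (1 / p₁) • tensorSq u₁ v + (1 / p₂) • tensorSq u₂ v + (1 / p₃) • tensorSq u₃ v = v := by
  intro v
  have h₁ : 0 < p₁ := by linarith
  have h₂ : 0 < p₂ := by linarith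
  have h₃ : 0 < p₃ := by linarith
  have h₁₁ : 1 / p₁ + 1 / p₂ * ((p₁ - 1) * (p₂ - 1)) + 1 / p₃ * ((p₁ - 1) * (p₃ - 1)) = 1 := by
    field_simp at hsum ⊢
    linear_combination (1 - p₁) * hsum
  have h₂₂ : 1 / p₂ * (p₁ * p₂ * (p₃ - 1) / p₃) + 1 / p₃ * (p₁ * p₃ * (p₂ - 1) / p₂) = 1 := by
    field_simp at hsum ⊢
    linear_combination -hsum
  have h₁₂ : 1 / p₂ * (√((p₁ - 1) * (p₂ - 1)) * √(p₁ * p₂ * (p₃ - 1) / p₃)) =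
      1 / p₃ * (√((p₁ - 1) * (p₃ - 1)) * √(p₁ * p₃ * (p₂ - 1) / p₂)) := by
    rw [one_div_mul_sqrt_mul_sqrt hp1.le hp2.le hp3.le,
      one_div_mul_sqrt_mul_sqrt hp1.le hp3.le hp2.le]
    ring_nf
  have key := sum_smul_tensorSq_eq_self univ ![1 / p₁, 1 / p₂, 1 / p₃] ![u₁, u₂, u₃]
  simp only [Fin.sum_univ_three, Matrix.cons_val_zero, Matrix.cons_val_one, Matrix.cons_val_two,
    Matrix.head_cons, Matrix.tail_cons] at key
  subst hu1 hu2 hu3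
  refine key ?_ ?_ ?_ v
  · rw [neg_sq, sq_sqrt (by nlinarith), sq_sqrt (by nlinarith)]
    linear_combination h₁₁
  · linear_combination h₁₂
  · rw [sq_sqrt (by positivity), sq_sqrt (by positivity)]
    linear_combination h₂₂
end

section
/- For t > 1 let t' = t/(t−1) and C_t = √(t^{1/t} / t'^{1/t'}). Let p, q, r > 1 satisfy 1/p + 1/q = 1 + 1/r. Then the number D = (1 − 1/r') log((1/r')√(p'q'/r)) + (1/p) log sin θ_2 + (1/q) log sin θ_3, where sin θ_2 = √(r'p/q') and sin θ_3 = √(r'q/p'), equals log(C_p C_q / C_r); explicitly, D = −(1/r) log √r + (1/r') log √(r') + (1/p) log √p − (1/p') log √(p') + (1/q) log √q − (1/q') log √(q'). -/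
open Real

theorem stmt12 (p q r p' q' r' D : ℝ)
    (hp : 1 < p) (hq : 1 < q) (hr : 1 < r)
    (hrel : 1 / p + 1 / q = 1 + 1 / r)
    (hp' : p' = p / (p - 1)) (hq' : q' = q / (q - 1)) (hr' : r' = r / (r - 1))
    (hD : D = (1 - 1 / r') * Real.log ((1 / r') * Real.sqrt (p' * q' / r))
            + (1 / p) * Real.log (Real.sqrt (r' * p / q'))
            + (1 / q) * Real.log (Real.sqrt (r' * q / p'))) :
    D = Real.log (Real.sqrt (p ^ (1 / p) / p' ^ (1 / p')) *
          Real.sqrt (q ^ (1 / q) / q' ^ (1 / q')) /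
          Real.sqrt (r ^ (1 / r) / r' ^ (1 / r'))) ∧
    D = -(1 / r) * Real.log (Real.sqrt r) + (1 / r') * Real.log (Real.sqrt r')
        + (1 / p) * Real.log (Real.sqrt p) - (1 / p') * Real.log (Real.sqrt p')
        + (1 / q) * Real.log (Real.sqrt q) - (1 / q') * Real.log (Real.sqrt q') := by
  have hp0 : (0:ℝ) < p := by linarith
  have hq0 : (0:ℝ) < q := by linarith
  have hr0 : (0:ℝ) < r := by linarith
  have hp1 : (0:ℝ) < p - 1 := by linarith
  have hq1 : (0:ℝ) < q - 1 := by linarith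
  have hr1 : (0:ℝ) < r - 1 := by linarith
  have hp'0 : (0:ℝ) < p' := by rw [hp']; positivity
  have hq'0 : (0:ℝ) < q' := by rw [hq']; positivity
  have hr'0 : (0:ℝ) < r' := by rw [hr']; positivity
  have h1p' : 1 / p' = 1 - 1 / p := by rw [hp']; field_simp
  have h1q' : 1 / q' = 1 - 1 / q := by rw [hq']; field_simp
  have h1r' : 1 / r' = 1 - 1 / r := by rw [hr']; field_simp
  have L1 : Real.log ((1 / r') * Real.sqrt (p' * q' / r))
      = -Real.log r' + (Real.log p' + Real.log q' - Real.log r) / 2 := by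
    rw [Real.log_mul (by positivity) (by positivity), Real.log_sqrt (by positivity)]
    rw [show (p' * q' / r) = p' * (q' / r) from by ring,
      Real.log_mul (by positivity) (by positivity),
      Real.log_div (by positivity) (by positivity),
      Real.log_div (by positivity) (by positivity), Real.log_one]
    ring
  have L2 : Real.log (Real.sqrt (r' * p / q'))
      = (Real.log r' + Real.log p - Real.log q') / 2 := by
    rw [Real.log_sqrt (by positivity), Real.log_div (by positivity) (by positivity),
      Real.log_mul (by positivity) (by positivity)]
  have L3 : Real.log (Real.sqrt (r' * q / p'))
      = (Real.log r' + Real.log q - Real.log p') / 2 := by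
    rw [Real.log_sqrt (by positivity), Real.log_div (by positivity) (by positivity),
      Real.log_mul (by positivity) (by positivity)]
  have Sp : Real.log (Real.sqrt p) = Real.log p / 2 := Real.log_sqrt hp0.le
  have Sq : Real.log (Real.sqrt q) = Real.log q / 2 := Real.log_sqrt hq0.le
  have Sr : Real.log (Real.sqrt r) = Real.log r / 2 := Real.log_sqrt hr0.le
  have Sp' : Real.log (Real.sqrt p') = Real.log p' / 2 := Real.log_sqrt hp'0.le
  have Sq' : Real.log (Real.sqrt q') = Real.log q' / 2 := Real.log_sqrt hq'0.le
  have Sr' : Real.log (Real.sqrt r') = Real.log r' / 2 := Real.log_sqrt hr'0.le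
  have key : D = -(1 / r) * Real.log (Real.sqrt r) + (1 / r') * Real.log (Real.sqrt r')
        + (1 / p) * Real.log (Real.sqrt p) - (1 / p') * Real.log (Real.sqrt p')
        + (1 / q) * Real.log (Real.sqrt q) - (1 / q') * Real.log (Real.sqrt q') := by
    rw [hD, L1, L2, L3, Sp, Sq, Sr, Sp', Sq', Sr', h1p', h1q', h1r']
    linear_combination ((Real.log r' - Real.log p' - Real.log q') / 2) * hrel
  refine ⟨?_, key⟩
  have M1 : Real.log (Real.sqrt (p ^ (1 / p) / p' ^ (1 / p')))
      = ((1 / p) * Real.log p - (1 / p') * Real.log p') / 2 := by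
    rw [Real.log_sqrt (by positivity), Real.log_div (by positivity) (by positivity),
      Real.log_rpow hp0, Real.log_rpow hp'0]
  have M2 : Real.log (Real.sqrt (q ^ (1 / q) / q' ^ (1 / q')))
      = ((1 / q) * Real.log q - (1 / q') * Real.log q') / 2 := by
    rw [Real.log_sqrt (by positivity), Real.log_div (by positivity) (by positivity),
      Real.log_rpow hq0, Real.log_rpow hq'0]
  have M3 : Real.log (Real.sqrt (r ^ (1 / r) / r' ^ (1 / r')))
      = ((1 / r) * Real.log r - (1 / r') * Real.log r') / 2 := by
    rw [Real.log_sqrt (by positivity), Real.log_div (by positivity) (by positivity),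
      Real.log_rpow hr0, Real.log_rpow hr'0]
  rw [key, Real.log_div (by positivity) (by positivity),
    Real.log_mul (by positivity) (by positivity), M1, M2, M3,
    Sp, Sq, Sr, Sp', Sq', Sr']
  ring
end

section
/- Let p_1, p_2, p_3 > 1 with 1/p_1 + 1/p_2 + 1/p_3 = 2, and let θ_2, θ_3 be the angles of Theorem 1 (cos θ_2 = √((p_1−1)(p_2−1)), sin θ_2 = √(p_1 p_2 (p_3−1)/p_3), cos θ_3 = −√((p_1−1)(p_3−1)), sin θ_3 = √(p_1 p_3 (p_2−1)/p_2)). For θ ∈ R let P_θ be the orthogonal projection on R^{2n} given by P_θ = U_θ* U_θ with U_θ(x,y) = cos θ x + sin θ y. Then (1/p_1) P_0 + (1/p_2) P_{θ_2} + (1/p_3) P_{θ_3} = Id_{R^{2n}}. -/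
/-!
`P θ` acts on `E × E` as the rank-one matrix `u(θ) u(θ)ᵀ` with `u(θ) = (cos θ, sin θ)`, so a
weighted sum of such maps is the identity as soon as the corresponding `2 × 2` matrix identity
holds, i.e. `∑ cᵢ cos² θᵢ = ∑ cᵢ sin² θᵢ = 1` and `∑ cᵢ cos θᵢ sin θᵢ = 0`. For the angles of
Theorem 1 the two squared sums reduce to `1/p₁ + 1/p₂ + 1/p₃ = 2`, and the cross terms cancel
because `cos θ₂ sin θ₂ / p₂` and `-cos θ₃ sin θ₃ / p₃` are both
`√(p₁ (p₁ - 1) (p₂ - 1) (p₃ - 1) / (p₂ p₃))`.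
-/

open Real

theorem LinearMap.sum_smul_eq_id_of_cos_sin {E ι : Type*} [AddCommGroup E] [Module ℝ E]
    (s : Finset ι) (c θ : ι → ℝ) (P : ℝ → (E × E) →ₗ[ℝ] (E × E))
    (hP : ∀ θ (x y : E), P θ (x, y) = (cos θ • (cos θ • x + sin θ • y),
      sin θ • (cos θ • x + sin θ • y)))
    (hcc : ∑ i ∈ s, c i * cos (θ i) ^ 2 = 1)
    (hcs : ∑ i ∈ s, c i * (cos (θ i) * sin (θ i)) = 0)
    (hss : ∑ i ∈ s, c i * sin (θ i) ^ 2 = 1) :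
    ∑ i ∈ s, c i • P (θ i) = LinearMap.id := by
  refine LinearMap.ext fun ⟨x, y⟩ => ?_
  have hsc : ∑ i ∈ s, c i * (sin (θ i) * cos (θ i)) = 0 := by
    simpa only [mul_comm (sin _)] using hcs
  simp only [LinearMap.sum_apply, LinearMap.smul_apply, hP, Prod.smul_mk,
    LinearMap.id_apply, Prod.ext_iff, Prod.fst_sum, Prod.snd_sum, smul_add, smul_smul,
    Finset.sum_add_distrib, ← Finset.sum_smul, ← mul_assoc, ← pow_two]
  simp only [mul_assoc, hcc, hcs, hsc, hss, one_smul, zero_smul, add_zero, zero_add, and_self]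

theorem sqrt_mul_sqrt_div_eq_sqrt {p q r : ℝ} (hpq : 0 ≤ (p - 1) * (q - 1)) (hq : 0 < q) :
    √((p - 1) * (q - 1)) * √(p * q * (r - 1) / r) / q
      = √(p * (p - 1) * (q - 1) * (r - 1) / (q * r)) := calc
  _ = √((p - 1) * (q - 1) * (p * q * (r - 1) / r)) / √(q ^ 2) := by
    rw [sqrt_mul hpq, sqrt_sq hq.le]
  _ = _ := by
    rw [← sqrt_div' _ (sq_nonneg q)]
    congr 1
    field_simp

theorem stmt18 (n : ℕ) (p₁ p₂ p₃ θ₂ θ₃ : ℝ)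
    (hp1 : 1 < p₁) (hp2 : 1 < p₂) (hp3 : 1 < p₃)
    (hsum : 1 / p₁ + 1 / p₂ + 1 / p₃ = 2)
    (hcos2 : Real.cos θ₂ = Real.sqrt ((p₁ - 1) * (p₂ - 1)))
    (hsin2 : Real.sin θ₂ = Real.sqrt (p₁ * p₂ * (p₃ - 1) / p₃))
    (hcos3 : Real.cos θ₃ = -Real.sqrt ((p₁ - 1) * (p₃ - 1)))
    (hsin3 : Real.sin θ₃ = Real.sqrt (p₁ * p₃ * (p₂ - 1) / p₂))
    (P : ℝ → ((EuclideanSpace ℝ (Fin n) × EuclideanSpace ℝ (Fin n)) →ₗ[ℝ]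
              (EuclideanSpace ℝ (Fin n) × EuclideanSpace ℝ (Fin n))))
    (hP : ∀ θ (x y : EuclideanSpace ℝ (Fin n)),
      P θ (x, y) = (Real.cos θ • (Real.cos θ • x + Real.sin θ • y),
                    Real.sin θ • (Real.cos θ • x + Real.sin θ • y))) :
    (1 / p₁) • P 0 + (1 / p₂) • P θ₂ + (1 / p₃) • P θ₃ = LinearMap.id := by
  have h₁ : 0 < p₁ := by linarith
  have h₂ : 0 < p₂ := by linarith
  have h₃ : 0 < p₃ := by linarith
  have hcc : 1 / p₁ + 1 / p₂ * cos θ₂ ^ 2 + 1 / p₃ * cos θ₃ ^ 2 = 1 := by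
    rw [hcos2, hcos3, neg_sq, sq_sqrt (by nlinarith), sq_sqrt (by nlinarith)]
    field_simp at hsum ⊢
    linear_combination (1 - p₁) * hsum
  have hss : 1 / p₂ * sin θ₂ ^ 2 + 1 / p₃ * sin θ₃ ^ 2 = 1 := by
    rw [hsin2, hsin3, sq_sqrt (by positivity), sq_sqrt (by positivity)]
    field_simp at hsum ⊢
    linear_combination -hsum
  have hcs : 1 / p₂ * (cos θ₂ * sin θ₂) + 1 / p₃ * (cos θ₃ * sin θ₃) = 0 := by
    have e₂ := sqrt_mul_sqrt_div_eq_sqrt (r := p₃) (by nlinarith : 0 ≤ (p₁ - 1) * (p₂ - 1)) h₂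
    have e₃ := sqrt_mul_sqrt_div_eq_sqrt (r := p₂) (by nlinarith : 0 ≤ (p₁ - 1) * (p₃ - 1)) h₃
    rw [show p₁ * (p₁ - 1) * (p₃ - 1) * (p₂ - 1) / (p₃ * p₂)
      = p₁ * (p₁ - 1) * (p₂ - 1) * (p₃ - 1) / (p₂ * p₃) by ring] at e₃
    rw [hcos2, hsin2, hcos3, hsin3]
    linear_combination e₂ - e₃
  simpa [Fin.sum_univ_three] using LinearMap.sum_smul_eq_id_of_cos_sin Finset.univ
    ![1 / p₁, 1 / p₂, 1 / p₃] ![0, θ₂, θ₃] P hP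
    (by simpa [Fin.sum_univ_three] using hcc) (by simpa [Fin.sum_univ_three] using hcs)
    (by simpa [Fin.sum_univ_three] using hss)
end
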